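/- arXiv:math/0702731 — 8 statements merged into one kernel-verified Lean document; each statement's English description precedes it below -/
import Mathlib

section
/- Let p be an odd prime and n a positive integer divisible by 4. Then the number of indices m with 0 ≤ m ≤ n/2 - 2, m even, such that p divides C(n,m) equals the number of indices m with 1 ≤ m ≤ n/2 - 1, m odd, such that p divides C(n,m). -/
open Finset

/-!
Let `T(n) = ∑_{m ≤ n, p ∤ C(n,m)} (-1)^m`. Writing `n = r + p q` with `r < p`, Lucas' theorem
factors the summand over the lowest base-`p` digit and, since `p` is odd,
`T(n) = [r even] · T(q)`. By induction on `k` this gives `T(2k) = [p ∤ C(2k,k)]`: if the lowest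
digit of `k` doubles without carry, both sides reduce to `k / p`; otherwise the lowest digit
of `2k` is odd and smaller than that of `k`, so both sides vanish. For `n = 2k` with `k` even,
the symmetry `m ↦ n - m` gives `T(n) = 2 S + [p ∤ C(n,k)]`, where `S` is the same signed sum
over `m < k`; hence `S = 0`. As `∑_{m<k} (-1)^m = 0` as well, the indices `m < k` with
`p ∣ C(n,m)` have alternating sum zero, i.e. as many of them are even as odd.
-/

theorem Nat.Prime.dvd_choose_iff_lt {p r s : ℕ} (hp : p.Prime) (hr : r < p) :
    p ∣ r.choose s ↔ r < s := by
  refine ⟨fun h => ?_, fun h => by simp [Nat.choose_eq_zero_of_lt h]⟩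
  by_contra! hsr
  have h_fact : p ∣ r.factorial :=
    Nat.choose_mul_factorial_mul_factorial hsr ▸ (h.mul_right _).mul_right _
  exact absurd (hp.dvd_factorial.mp h_fact) (not_le.mpr hr)

theorem Nat.Prime.dvd_choose_add_mul_iff {p r s : ℕ} (hp : p.Prime) (hr : r < p) (hs : s < p)
    (q a : ℕ) : p ∣ (r + p * q).choose (s + p * a) ↔ r < s ∨ p ∣ q.choose a := by
  have := Fact.mk hp
  rw [(Choose.choose_modEq_choose_mod_mul_choose_div_nat (p := p)).dvd_iff dvd_rfl, hp.dvd_mul,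
    Nat.add_mul_mod_self_left, Nat.add_mul_mod_self_left, Nat.mod_eq_of_lt hr,
    Nat.mod_eq_of_lt hs, Nat.add_mul_div_left _ _ hp.pos, Nat.add_mul_div_left _ _ hp.pos,
    Nat.div_eq_of_lt hr, Nat.div_eq_of_lt hs, zero_add, zero_add, hp.dvd_choose_iff_lt hr]

theorem Finset.sum_range_mul_eq_sum_sum {M : Type*} [AddCommMonoid M] (f : ℕ → M) (p q : ℕ) :
    ∑ m ∈ range (p * q), f m = ∑ a ∈ range q, ∑ b ∈ range p, f (b + p * a) := by
  induction q with
  | zero => simp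
  | succ q ih =>
    rw [Nat.mul_succ, sum_range_add, ih, sum_range_succ]
    simp only [add_comm]

theorem Finset.sum_range_two_mul_add_one_of_symm {M : Type*} [AddCommMonoid M] {f : ℕ → M}
    {k : ℕ} (hf : ∀ j ≤ 2 * k, f (2 * k - j) = f j) :
    ∑ m ∈ range (2 * k + 1), f m = ∑ m ∈ range k, f m + (∑ m ∈ range k, f m + f k) := by
  rw [show 2 * k + 1 = k + (k + 1) by ring, sum_range_add, ← sum_range_succ]
  congr 1
  rw [← sum_range_reflect]
  refine sum_congr rfl fun j hj => ?_
  rw [mem_range] at hj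
  rw [← hf j (by omega)]
  congr 1
  omega

theorem sum_neg_one_pow_eq_card_filter_even_sub_card_filter_odd (s : Finset ℕ) :
    ∑ m ∈ s, (-1 : ℤ) ^ m = #(s.filter Even) - #(s.filter Odd) := by
  rw [← sum_filter_add_sum_filter_not s Even,
    sum_congr rfl fun m hm => (mem_filter.mp hm).2.neg_one_pow,
    sum_congr rfl fun m hm => (Nat.not_even_iff_odd.mp (mem_filter.mp hm).2).neg_one_pow]
  simp [sub_eq_add_neg, Nat.not_even_iff_odd]

theorem card_filter_even_eq_card_filter_odd_of_sum_eq_zero {s : Finset ℕ}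
    (hs : ∑ m ∈ s, (-1 : ℤ) ^ m = 0) : #(s.filter Even) = #(s.filter Odd) := by
  rw [sum_neg_one_pow_eq_card_filter_even_sub_card_filter_odd] at hs
  omega

def signedNondivCount (p n k : ℕ) : ℤ :=
  ∑ m ∈ range k, if p ∣ n.choose m then 0 else (-1) ^ m

theorem sum_filter_dvd_choose_add_signedNondivCount (p n k : ℕ) :
    ∑ m ∈ (range k).filter (fun m => p ∣ n.choose m), (-1 : ℤ) ^ m +
        signedNondivCount p n k =
      ∑ m ∈ range k, (-1) ^ m := by
  rw [signedNondivCount, sum_filter, ← sum_add_distrib]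
  refine sum_congr rfl fun m _ => ?_
  split_ifs <;> simp

theorem signedNondivCount_add_mul {p r : ℕ} (hp : p.Prime) (hodd : Odd p) (hr : r < p) (q : ℕ) :
    signedNondivCount p (r + p * q) (r + p * q + 1) =
      (if Even r then 1 else 0) * signedNondivCount p q (q + 1) := by
  have h_extend : signedNondivCount p (r + p * q) (r + p * q + 1) =
      ∑ m ∈ range (p * (q + 1)), if p ∣ (r + p * q).choose m then 0 else (-1 : ℤ) ^ m := by
    refine sum_subset (range_subset_range.mpr (by rw [Nat.mul_succ]; omega)) fun m _ hm => ?_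
    rw [mem_range, not_lt] at hm
    simp [Nat.choose_eq_zero_of_lt (show r + p * q < m by omega)]
  have h_term : ∀ a, ∀ b < p, (if p ∣ (r + p * q).choose (b + p * a) then 0
      else (-1 : ℤ) ^ (b + p * a)) =
        (if b ≤ r then (-1) ^ b else 0) * (if p ∣ q.choose a then 0 else (-1) ^ a) := by
    intro a b hb
    simp only [hp.dvd_choose_add_mul_iff hr hb, pow_add, pow_mul, hodd.neg_one_pow]
    by_cases hbr : r < b
    · simp [hbr, not_le.mpr hbr]
    · simp [hbr, not_lt.mp hbr]
  have h_digit : ∑ b ∈ range p, (if b ≤ r then (-1 : ℤ) ^ b else 0) =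
      if Even r then 1 else 0 := by
    rw [← sum_filter, show (range p).filter (· ≤ r) = range (r + 1) by ext; simp; omega,
      neg_one_geom_sum]
    by_cases h : Even r <;> simp [h, Nat.even_add_one]
  rw [h_extend, sum_range_mul_eq_sum_sum, signedNondivCount, mul_sum]
  refine sum_congr rfl fun a _ => ?_
  rw [sum_congr rfl fun b hb => h_term a b (mem_range.mp hb), ← sum_mul, h_digit]

theorem signedNondivCount_two_mul {p : ℕ} (hp : p.Prime) (hodd : Odd p) (k : ℕ) :
    signedNondivCount p (2 * k) (2 * k + 1) = if p ∣ (2 * k).choose k then 0 else 1 := by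
  induction k using Nat.strong_induction_on with
  | _ k ih =>
  rcases k.eq_zero_or_pos with rfl | hk
  · simp [signedNondivCount, hp.ne_one]
  obtain ⟨x, y, hx, rfl, hy⟩ : ∃ x y, x < p ∧ k = x + p * y ∧ y < k :=
    ⟨k % p, k / p, k.mod_lt hp.pos, (k.mod_add_div p).symm, k.div_lt_self hk hp.one_lt⟩
  by_cases h2x : 2 * x < p
  · rw [show 2 * (x + p * y) = 2 * x + p * (2 * y) by ring,
      signedNondivCount_add_mul hp hodd h2x,
      if_pos (even_two_mul x), one_mul, ih y hy]
    simp only [hp.dvd_choose_add_mul_iff h2x hx, show ¬ 2 * x < x by omega, false_or]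
  · have hxp : p ≤ 2 * x := by omega
    rw [show 2 * (x + p * y) = (2 * x - p) + p * (2 * y + 1) by zify [hxp]; ring,
      signedNondivCount_add_mul hp hodd (by omega),
      if_neg (Nat.not_even_iff_odd.mpr (Nat.Even.sub_odd hxp (even_two_mul x) hodd)), zero_mul,
      if_pos ((hp.dvd_choose_add_mul_iff (by omega) hx _ _).mpr (Or.inl (by omega)))]

theorem signedNondivCount_two_mul_of_even {p k : ℕ} (hp : p.Prime) (hodd : Odd p) (hk : Even k) :
    signedNondivCount p (2 * k) k = 0 := by
  have h_symm : ∀ j ≤ 2 * k,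
      (if p ∣ (2 * k).choose (2 * k - j) then 0 else (-1 : ℤ) ^ (2 * k - j)) =
        if p ∣ (2 * k).choose j then 0 else (-1) ^ j := by
    intro j hj
    rw [Nat.choose_symm hj, neg_one_pow_congr (n := j) (by simp [Nat.even_sub hj])]
  have h := sum_range_two_mul_add_one_of_symm
    (f := fun m => if p ∣ (2 * k).choose m then 0 else (-1 : ℤ) ^ m) h_symm
  rw [← signedNondivCount, ← signedNondivCount, signedNondivCount_two_mul hp hodd,
    hk.neg_one_pow] at h
  split_ifs at h <;> omega

theorem binom_lemma_four_dvd_general (p n : ℕ) (hp : p.Prime) (hodd : Odd p)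
    (h4 : 4 ∣ n) :
    ((Finset.range (n / 2 - 1)).filter (fun m => Even m ∧ p ∣ n.choose m)).card =
      ((Finset.range (n / 2)).filter (fun m => Odd m ∧ p ∣ n.choose m)).card := by
  obtain ⟨k, hk, rfl⟩ : ∃ k, Even k ∧ n = 2 * k := by
    obtain ⟨c, rfl⟩ := h4
    exact ⟨2 * c, even_two_mul c, by ring⟩
  have h_sum :
      ∑ m ∈ (range k).filter (fun m => p ∣ (2 * k).choose m), (-1 : ℤ) ^ m = 0 := by
    have h := sum_filter_dvd_choose_add_signedNondivCount p (2 * k) k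
    rwa [signedNondivCount_two_mul_of_even hp hodd hk, add_zero, neg_one_geom_sum,
      if_pos hk] at h
  have h_range : (range (k - 1)).filter (fun m => Even m ∧ p ∣ (2 * k).choose m) =
      (range k).filter (fun m => Even m ∧ p ∣ (2 * k).choose m) := by
    ext m
    simp only [mem_filter, mem_range]
    refine ⟨fun ⟨hm, h⟩ => ⟨by omega, h⟩, fun ⟨hm, hme, h⟩ => ⟨?_, hme, h⟩⟩
    rw [Nat.even_iff] at hk hme
    omega
  rw [Nat.mul_div_cancel_left k two_pos, h_range]
  simpa only [filter_filter, and_comm] using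
    card_filter_even_eq_card_filter_odd_of_sum_eq_zero h_sum

/-- For an odd prime `p` and `n` a positive multiple of 4, the even indices
`0 ≤ m ≤ n/2 - 2` with `p ∣ C(n,m)` are as numerous as the odd indices
`1 ≤ m ≤ n/2 - 1` with `p ∣ C(n,m)`. -/
theorem binom_lemma_four_dvd (p n : ℕ) (hp : p.Prime) (hodd : Odd p)
    (hn : 0 < n) (h4 : 4 ∣ n) :
    ((Finset.range (n / 2 - 1)).filter (fun m => Even m ∧ p ∣ n.choose m)).card =
      ((Finset.range (n / 2)).filter (fun m => Odd m ∧ p ∣ n.choose m)).card :=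
  binom_lemma_four_dvd_general p n hp hodd h4
end

section
/- Let p be an odd prime and n a positive integer congruent to 2 mod 4. Then the number of even indices m with 0 ≤ m ≤ n/2 - 1 such that p divides C(n,m) equals the number of indices m in the set {odd m : 1 ≤ m ≤ n/2 - 2} ∪ {n/2} such that p divides C(n,m). -/
open Finset

private lemma sum_range_mul_split {M : Type*} [AddCommMonoid M] (f : ℕ → M) (a b : ℕ) :
    ∑ m ∈ Finset.range (a * b), f m
      = ∑ s ∈ Finset.range b, ∑ t ∈ Finset.range a, f (a * s + t) := by
  induction b with
  | zero => simp
  | succ b ih =>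
    rw [Nat.mul_succ, Finset.sum_range_add, ih, Finset.sum_range_succ]

private lemma dvd_choose_split (p : ℕ) (hp : p.Prime) (n m : ℕ) :
    p ∣ n.choose m ↔ (p ∣ (n % p).choose (m % p) ∨ p ∣ (n / p).choose (m / p)) := by
  haveI : Fact p.Prime := ⟨hp⟩
  have h := (Choose.choose_modEq_choose_mod_mul_choose_div_nat (p := p) (n := n) (k := m))
  have key : p ∣ n.choose m ↔ p ∣ ((n % p).choose (m % p) * (n / p).choose (m / p)) := by
    constructor
    · intro hd
      exact (Nat.modEq_zero_iff_dvd).mp (h.symm.trans (Nat.modEq_zero_iff_dvd.mpr hd))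
    · intro hd
      exact (Nat.modEq_zero_iff_dvd).mp (h.trans (Nat.modEq_zero_iff_dvd.mpr hd))
  rw [key, hp.dvd_mul]

private lemma notdvd_small (p : ℕ) (hp : p.Prime) {r t : ℕ} (hr : r < p) (ht : t ≤ r) :
    ¬ p ∣ r.choose t := by
  intro hd
  have h1 : r.choose t * t.factorial * (r - t).factorial = r.factorial :=
    Nat.choose_mul_factorial_mul_factorial ht
  have h2 : p ∣ r.factorial := h1 ▸ ((hd.mul_right _).mul_right _)
  have := (Nat.Prime.dvd_factorial hp).mp h2
  omega

private lemma blm_inner_sum (p : ℕ) (hp : p.Prime) {r : ℕ} (hr : r < p) :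
    ∑ t ∈ Finset.range p, (if p ∣ r.choose t then 0 else (-1:ℤ)^t)
      = if Even r then 1 else 0 := by
  have hpt : ∀ t, (if p ∣ r.choose t then (0:ℤ) else (-1)^t)
      = if t < r + 1 then (-1:ℤ)^t else 0 := by
    intro t
    by_cases ht : t ≤ r
    · rw [if_neg (notdvd_small p hp hr ht), if_pos (by omega)]
    · rw [if_pos (by rw [Nat.choose_eq_zero_of_lt (by omega)]; exact dvd_zero p),
        if_neg (by omega)]
  rw [Finset.sum_congr rfl (fun t _ => hpt t)]
  have hsub : ∑ t ∈ Finset.range p, (if t < r + 1 then (-1:ℤ)^t else 0)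
      = ∑ t ∈ Finset.range (r+1), (if t < r + 1 then (-1:ℤ)^t else 0) := by
    refine (Finset.sum_subset (Finset.range_subset_range.mpr (by omega)) ?_).symm
    intro t _ ht
    rw [Finset.mem_range, not_lt] at ht
    exact if_neg (by omega)
  rw [hsub, Finset.sum_congr rfl (fun t htm => if_pos (Finset.mem_range.mp htm)),
    neg_one_geom_sum]
  rcases Nat.even_or_odd r with he | ho
  · rw [if_neg (by simpa [Nat.even_add_one] using he), if_pos he]
  · rw [if_pos (by simpa [Nat.even_add_one] using ho), if_neg (by simpa using ho)]

private lemma blm_T_rec (p : ℕ) (hp : p.Prime) (hodd : Odd p) (N : ℕ) :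
    ∑ m ∈ Finset.range (N + 1), (if p ∣ N.choose m then 0 else (-1:ℤ)^m)
      = (if Even (N % p) then 1 else 0) *
        ∑ s ∈ Finset.range (N / p + 1), (if p ∣ (N / p).choose s then 0 else (-1:ℤ)^s) := by
  have hp1 : 1 < p := hp.one_lt
  have hdm := Nat.div_add_mod N p
  have hmlt : N % p < p := Nat.mod_lt _ (by omega)
  have hNP : N + 1 ≤ p * (N / p + 1) := by
    have : p * (N / p + 1) = p * (N / p) + p := by ring
    omega
  have hext : ∑ m ∈ Finset.range (N + 1), (if p ∣ N.choose m then 0 else (-1:ℤ)^m)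
      = ∑ m ∈ Finset.range (p * (N / p + 1)), (if p ∣ N.choose m then 0 else (-1:ℤ)^m) := by
    apply Finset.sum_subset (Finset.range_subset_range.mpr hNP)
    intro m _ hm
    rw [Finset.mem_range, not_lt] at hm
    rw [if_pos (by rw [Nat.choose_eq_zero_of_lt (by omega)]; exact dvd_zero p)]
  rw [hext, sum_range_mul_split]
  have hq : ∀ s, ∑ t ∈ Finset.range p, (if p ∣ N.choose (p * s + t) then 0 else (-1:ℤ)^(p*s+t))
      = (if p ∣ (N/p).choose s then 0 else (-1:ℤ)^s) * (if Even (N % p) then 1 else 0) := by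
    intro s
    have hterm : ∀ t ∈ Finset.range p, (if p ∣ N.choose (p * s + t) then (0:ℤ) else (-1)^(p*s+t))
        = (if p ∣ (N/p).choose s then 0 else (-1:ℤ)^s)
          * (if p ∣ (N % p).choose t then 0 else (-1:ℤ)^t) := by
      intro t htp
      rw [Finset.mem_range] at htp
      have hmod : (p * s + t) % p = t := by rw [Nat.mul_add_mod]; exact Nat.mod_eq_of_lt htp
      have hdiv : (p * s + t) / p = s := by
        rw [Nat.mul_add_div (by omega), Nat.div_eq_of_lt htp, add_zero]
      have hpow : (-1:ℤ)^(p*s+t) = (-1)^s * (-1)^t := by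
        rw [pow_add, pow_mul, hodd.neg_one_pow]
      simp only [dvd_choose_split p hp N (p*s+t), hmod, hdiv, hpow]
      by_cases h1 : p ∣ (N % p).choose t <;> by_cases h2 : p ∣ (N / p).choose s <;>
        simp [h1, h2]
    rw [Finset.sum_congr rfl hterm, ← Finset.mul_sum, blm_inner_sum p hp hmlt]
  rw [Finset.sum_congr rfl (fun s _ => hq s), ← Finset.sum_mul, mul_comm]

private lemma blm_T_eval (p : ℕ) (hp : p.Prime) (hodd : Odd p) : ∀ k : ℕ,
    ∑ m ∈ Finset.range (2 * k + 1), (if p ∣ (2 * k).choose m then 0 else (-1:ℤ)^m)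
      = if p ∣ (2 * k).choose k then 0 else 1 := by
  intro k
  induction k using Nat.strong_induction_on with
  | _ k ih =>
  rcases Nat.eq_zero_or_pos k with rfl | hk
  · simp [hp.not_dvd_one]
  have hp1 : 1 < p := hp.one_lt
  have hdm := Nat.div_add_mod k p
  have hap : k % p < p := Nat.mod_lt _ (by omega)
  have hrec := blm_T_rec p hp hodd (2 * k)
  by_cases hcase : 2 * (k % p) < p
  · have h2k : 2 * k = p * (2 * (k / p)) + 2 * (k % p) := by
      have : p * (2 * (k / p)) = 2 * (p * (k / p)) := by ring
      omega
    have hmod2 : (2 * k) % p = 2 * (k % p) := by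
      rw [h2k, Nat.mul_add_mod]; exact Nat.mod_eq_of_lt hcase
    have hdiv2 : (2 * k) / p = 2 * (k / p) := by
      rw [h2k, Nat.mul_add_div (by omega), Nat.div_eq_of_lt hcase, add_zero]
    have hnd : ¬ p ∣ (2 * (k % p)).choose (k % p) :=
      notdvd_small p hp hcase (by omega)
    have hiff : p ∣ (2 * k).choose k ↔ p ∣ (2 * (k / p)).choose (k / p) := by
      rw [dvd_choose_split p hp (2 * k) k, hmod2, hdiv2, or_iff_right hnd]
    rw [hrec, hmod2, hdiv2, if_pos (even_two_mul (k % p)), one_mul,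
      ih (k / p) (Nat.div_lt_self hk hp1)]
    simp only [hiff]
  · have h2k : 2 * k = p * (2 * (k / p) + 1) + (2 * (k % p) - p) := by
      have : p * (2 * (k / p) + 1) = 2 * (p * (k / p)) + p := by ring
      omega
    have hmod2 : (2 * k) % p = 2 * (k % p) - p := by
      rw [h2k, Nat.mul_add_mod]; exact Nat.mod_eq_of_lt (by omega)
    have hne : ¬ Even ((2 * k) % p) := by
      rw [hmod2]
      rcases hodd with ⟨c, hc⟩
      rintro ⟨d, hd⟩
      omega
    have hdvd : p ∣ (2 * k).choose k := by
      rw [dvd_choose_split p hp (2 * k) k, hmod2]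
      exact Or.inl (by rw [Nat.choose_eq_zero_of_lt (by omega)]; exact dvd_zero p)
    rw [hrec, if_neg hne, zero_mul, if_pos hdvd]

private lemma blm_T_split (p k : ℕ) :
    ∑ m ∈ Finset.range (2 * k + 1), (if p ∣ (2 * k).choose m then 0 else (-1:ℤ)^m)
      = 2 * (∑ m ∈ Finset.range k, (if p ∣ (2 * k).choose m then 0 else (-1:ℤ)^m))
        + (if p ∣ (2 * k).choose k then 0 else (-1:ℤ)^k) := by
  have hsplit : Finset.range (2 * k + 1) = Finset.range k ∪ Finset.Ico k (2 * k + 1) := by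
    ext m
    simp only [Finset.mem_range, Finset.mem_union, Finset.mem_Ico]
    omega
  rw [hsplit, Finset.sum_union (by
    simp only [Finset.disjoint_left, Finset.mem_range, Finset.mem_Ico]
    omega),
    Finset.sum_eq_sum_Ico_succ_bot (show k < 2 * k + 1 by omega)]
  have htail : ∑ m ∈ Finset.Ico (k + 1) (2 * k + 1),
      (if p ∣ (2 * k).choose m then 0 else (-1:ℤ)^m)
      = ∑ m ∈ Finset.range k, (if p ∣ (2 * k).choose m then 0 else (-1:ℤ)^m) := by
    apply Finset.sum_nbij' (i := fun m => 2 * k - m) (j := fun m => 2 * k - m)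
    · intro a ha
      rw [Finset.mem_Ico] at ha
      rw [Finset.mem_range]
      omega
    · intro a ha
      rw [Finset.mem_range] at ha
      rw [Finset.mem_Ico]
      omega
    · intro a ha
      rw [Finset.mem_Ico] at ha
      omega
    · intro a ha
      rw [Finset.mem_range] at ha
      omega
    · intro a ha
      rw [Finset.mem_Ico] at ha
      have hch : (2 * k).choose (2 * k - a) = (2 * k).choose a :=
        Nat.choose_symm (by omega)
      have hpw : (-1:ℤ)^(2 * k - a) = (-1:ℤ)^a := by
        rcases Nat.even_or_odd a with he | ho
        · have : Even (2 * k - a) := (Nat.even_sub (by omega)).mpr (by simp [he])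
          rw [this.neg_one_pow, he.neg_one_pow]
        · have hno : ¬ Even (2 * k - a) := by
            rw [Nat.even_sub (by omega)]
            simp [Nat.not_even_iff_odd.mpr ho]
          rw [(Nat.not_even_iff_odd.mp hno).neg_one_pow, ho.neg_one_pow]
      rw [hch, hpw]
  rw [htail]
  ring

/-- For an odd prime `p` and `n ≡ 2 (mod 4)`, the even indices `0 ≤ m ≤ n/2 - 1`
with `p ∣ C(n,m)` are as numerous as the indices in
`{odd m : 1 ≤ m ≤ n/2 - 2} ∪ {n/2}` with `p ∣ C(n,m)`. -/
theorem binom_lemma_two_mod_four (p n : ℕ) (hp : p.Prime) (hodd : Odd p)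
    (hn : n % 4 = 2) :
    ((Finset.range (n / 2)).filter (fun m => Even m ∧ p ∣ n.choose m)).card =
      ((((Finset.range (n / 2 - 1)).filter (fun m => Odd m)) ∪ {n / 2}).filter
        (fun m => p ∣ n.choose m)).card := by
  obtain ⟨k, rfl, hkodd⟩ : ∃ k, n = 2 * k ∧ Odd k := ⟨n / 2, by omega, n / 4, by omega⟩
  have hk1 : 1 ≤ k := by rcases hkodd with ⟨c, rfl⟩; omega
  have hhalf : 2 * k / 2 = k := by omega
  rw [hhalf]
  -- the divisibility-free alternating sum over `range k`
  have hS3 : ∑ m ∈ Finset.range k, (if p ∣ (2 * k).choose m then (0:ℤ) else (-1)^m)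
      = (if p ∣ (2 * k).choose k then 0 else 1) := by
    have h1 := blm_T_eval p hp hodd k
    rw [blm_T_split p k, hkodd.neg_one_pow] at h1
    split_ifs at h1 ⊢ <;> linarith
  have hsum1 : ∑ m ∈ Finset.range k, ((-1:ℤ))^m = 1 := by
    rw [neg_one_geom_sum, if_neg (Nat.not_even_iff_odd.mpr hkodd)]
  have hdecomp : ∀ m : ℕ, ((-1:ℤ))^m
      = (if Even m ∧ p ∣ (2 * k).choose m then (1:ℤ) else 0)
        - (if Odd m ∧ p ∣ (2 * k).choose m then (1:ℤ) else 0)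
        + (if p ∣ (2 * k).choose m then (0:ℤ) else (-1)^m) := by
    intro m
    by_cases hd : p ∣ (2 * k).choose m <;> rcases Nat.even_or_odd m with he | ho
    · simp [hd, he, Nat.not_odd_iff_even.mpr he, he.neg_one_pow]
    · simp [hd, ho, Nat.not_even_iff_odd.mpr ho, ho.neg_one_pow]
    · simp [hd, he, Nat.not_odd_iff_even.mpr he, he.neg_one_pow]
    · simp [hd, ho, Nat.not_even_iff_odd.mpr ho, ho.neg_one_pow]
  have hmain : (∑ m ∈ Finset.range k, (if Even m ∧ p ∣ (2 * k).choose m then (1:ℤ) else 0))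
      - (∑ m ∈ Finset.range k, (if Odd m ∧ p ∣ (2 * k).choose m then (1:ℤ) else 0))
      + (∑ m ∈ Finset.range k, (if p ∣ (2 * k).choose m then (0:ℤ) else (-1)^m)) = 1 := by
    rw [← Finset.sum_sub_distrib, ← Finset.sum_add_distrib]
    exact Eq.trans (Finset.sum_congr rfl (fun m _ => (hdecomp m).symm)) hsum1
  -- rewrite the RHS of the goal
  have hfilter : ((Finset.range (k - 1)).filter (fun m => Odd m)).filter
      (fun m => p ∣ (2 * k).choose m)
      = (Finset.range k).filter (fun m => Odd m ∧ p ∣ (2 * k).choose m) := by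
    ext m
    simp only [Finset.mem_filter, Finset.mem_range]
    rcases hkodd with ⟨c, hc⟩
    constructor
    · rintro ⟨⟨h1, h2⟩, h3⟩
      exact ⟨by omega, h2, h3⟩
    · rintro ⟨h1, h2, h3⟩
      refine ⟨⟨?_, h2⟩, h3⟩
      rcases h2 with ⟨d, hd⟩
      omega
  rw [Finset.filter_union, Finset.card_union_of_disjoint (by
      simp only [Finset.disjoint_left, Finset.mem_filter, Finset.mem_range,
        Finset.mem_singleton]
      rintro m ⟨⟨h1, _⟩, _⟩ ⟨rfl, _⟩
      omega), hfilter, Finset.filter_singleton]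
  rw [apply_ite Finset.card, Finset.card_singleton, Finset.card_empty]
  -- cast cards to integer sums
  have hcard : ∀ (Q : ℕ → Prop) (inst : DecidablePred Q),
      ((((Finset.range k).filter Q).card : ℤ)
        = ∑ m ∈ Finset.range k, (if Q m then (1:ℤ) else 0)) := by
    intro Q inst
    rw [Finset.card_filter]
    push_cast
    exact Finset.sum_congr rfl (fun m _ => by split_ifs <;> simp)
  have hA := hcard (fun m => Even m ∧ p ∣ (2 * k).choose m) inferInstance
  have hB := hcard (fun m => Odd m ∧ p ∣ (2 * k).choose m) inferInstance
  have e1 : ((((Finset.range k).filter (fun m => Even m ∧ p ∣ (2 * k).choose m)).card : ℤ)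
      - (((Finset.range k).filter (fun m => Odd m ∧ p ∣ (2 * k).choose m)).card : ℤ))
      = if p ∣ (2 * k).choose k then 1 else 0 := by
    rw [hA, hB, hS3] at *
    split_ifs at hmain ⊢ <;> linarith
  by_cases hd : p ∣ (2 * k).choose k
  · rw [if_pos hd] at e1 ⊢
    omega
  · rw [if_neg hd] at e1 ⊢
    omega
end

section
/- Let n be an even positive integer. The number of even indices m with 0 ≤ m < n/2 such that C(n,m) is odd equals 2^{s(n)-1}, where s(n) is the number of 1's in the binary expansion of n. -/
/-!
By Lucas' theorem at `p = 2`, `C(2q + r, 2j + s)` is odd iff `s ≤ r` and `C(q, j)` is odd, so each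
binary digit `1` of `n` doubles the number of odd entries in row `n` of Pascal's triangle, which is
therefore `2 ^ s(n)`. For `n = 2q` even, odd entries sit at even positions only, the central entry
`C(2q, q)` is even, and `m ↦ 2q - m` swaps the odd entries left and right of the centre; so exactly
half of the `2 ^ s(n)` odd entries lie at the even positions `m < q`.
-/

open Finset

namespace Nat

def oddChooseIndices (n : ℕ) : Finset ℕ :=
  (range (n + 1)).filter fun m => Odd (n.choose m)

theorem le_of_odd_choose {n m : ℕ} (h : Odd (n.choose m)) : m ≤ n := by
  by_contra! hlt
  exact not_odd_zero (choose_eq_zero_of_lt hlt ▸ h)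

theorem mem_oddChooseIndices {n m : ℕ} : m ∈ oddChooseIndices n ↔ Odd (n.choose m) := by
  simp only [oddChooseIndices, mem_filter, mem_range, and_iff_right_iff_imp]
  exact fun h => lt_succ_of_le (le_of_odd_choose h)

theorem odd_choose_two_mul_add_iff (q j : ℕ) {r s : ℕ} (hr : r < 2) (hs : s < 2) :
    Odd ((2 * q + r).choose (2 * j + s)) ↔ s ≤ r ∧ Odd (q.choose j) := by
  have lucas := Choose.choose_modEq_choose_mod_mul_choose_div_nat
    (n := 2 * q + r) (k := 2 * j + s) (p := 2)
  have hdiv : (2 * q + r) / 2 = q ∧ (2 * j + s) / 2 = j := by omega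
  have hmod : (2 * q + r) % 2 = r ∧ (2 * j + s) % 2 = s := by omega
  rw [hdiv.1, hdiv.2, hmod.1, hmod.2] at lucas
  rw [odd_iff, lucas, ← odd_iff, odd_mul]
  interval_cases r <;> interval_cases s <;> simp

theorem card_oddChooseIndices_two_mul_add (q : ℕ) {r : ℕ} (hr : r < 2) :
    #(oddChooseIndices (2 * q + r)) = (r + 1) * #(oddChooseIndices q) := by
  rw [← card_range (r + 1), ← card_product]
  refine card_nbij' (fun m => (m % 2, m / 2)) (fun p => 2 * p.2 + p.1) ?_ ?_ ?_ ?_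
  · intro m hm
    simp only [coe_product, Set.mem_prod, mem_coe, mem_range, mem_oddChooseIndices] at hm ⊢
    rw [← div_add_mod m 2, odd_choose_two_mul_add_iff q _ hr (mod_lt m two_pos)] at hm
    exact ⟨by omega, hm.2⟩
  · rintro ⟨s, j⟩ hp
    simp only [coe_product, Set.mem_prod, mem_coe, mem_range, mem_oddChooseIndices] at hp ⊢
    rw [odd_choose_two_mul_add_iff q j hr (by omega)]
    exact ⟨by omega, hp.2⟩
  · intro m _
    simp only
    omega
  · rintro ⟨s, j⟩ hp
    simp only [coe_product, Set.mem_prod, mem_coe, mem_range] at hp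
    simp only [Prod.mk.injEq]
    omega

theorem card_oddChooseIndices (n : ℕ) :
    #(oddChooseIndices n) = 2 ^ (digits 2 n).count 1 := by
  induction n using Nat.strong_induction_on with
  | _ n ih =>
    rcases eq_zero_or_pos n with rfl | hn
    · rfl
    · have hsplit : n = 2 * (n / 2) + n % 2 := (div_add_mod n 2).symm
      rw [hsplit, card_oddChooseIndices_two_mul_add _ (mod_lt n two_pos), ← hsplit,
        ih _ (div_lt_self hn one_lt_two), digits_def' one_lt_two hn, List.count_cons]
      rcases mod_two_eq_zero_or_one n with h | h <;> simp [h, pow_succ, mul_comm]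

theorem even_of_odd_choose {n m : ℕ} (hn : Even n) (h : Odd (n.choose m)) : Even m := by
  obtain ⟨q, rfl⟩ := hn
  rw [← two_mul, ← add_zero (2 * q), ← div_add_mod m 2,
    odd_choose_two_mul_add_iff q _ two_pos (mod_lt m two_pos)] at h
  exact even_iff.mpr (by omega)

theorem two_mul_card_oddChooseIndices_filter_lt {q : ℕ} (hq : 0 < q) :
    2 * #((oddChooseIndices (2 * q)).filter (· < q)) = #(oddChooseIndices (2 * q)) := by
  have hcentral : ¬ Odd ((2 * q).choose q) := by
    rw [not_odd_iff_even, even_iff_two_dvd, ← centralBinom_eq_two_mul_choose]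
    exact two_dvd_centralBinom_of_one_le hq
  have hreflect : #((oddChooseIndices (2 * q)).filter (¬ · < q)) =
      #((oddChooseIndices (2 * q)).filter (· < q)) := by
    refine card_nbij' (2 * q - ·) (2 * q - ·) ?_ ?_ ?_ ?_ <;>
      intro m hm <;> simp only [coe_filter, Set.mem_ofPred_eq, mem_oddChooseIndices] at hm ⊢
    · have hne : m ≠ q := by rintro rfl; exact hcentral hm.1
      exact ⟨by rw [choose_symm (le_of_odd_choose hm.1)]; exact hm.1, by omega⟩
    · exact ⟨by rw [choose_symm (by omega)]; exact hm.1, by omega⟩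
    · have := le_of_odd_choose hm.1
      omega
    · omega
  have hpartition := card_filter_add_card_filter_not (s := oddChooseIndices (2 * q)) (· < q)
  omega

end Nat

/-- For `n` even and positive, the number of even `m < n/2` with `C(n,m)` odd is
`2 ^ (s(n) - 1)`, where `s(n)` is the number of ones in the binary expansion of `n`. -/
theorem card_odd_binom_even_index (n : ℕ) (hn : Even n) (hpos : 0 < n) :
    ((Finset.range (n / 2)).filter (fun m => Even m ∧ Odd (n.choose m))).card =
      2 ^ ((Nat.digits 2 n).count 1 - 1) := by
  obtain ⟨q, rfl⟩ := even_iff_exists_two_mul.mp hn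
  have hset : (range (2 * q / 2)).filter (fun m => Even m ∧ Odd ((2 * q).choose m)) =
      (Nat.oddChooseIndices (2 * q)).filter (· < q) := by
    ext m
    simp only [mem_filter, mem_range, Nat.mem_oddChooseIndices,
      mul_div_cancel_left₀ q two_ne_zero]
    exact ⟨fun ⟨hm, _, hodd⟩ => ⟨hodd, hm⟩,
      fun ⟨hodd, hm⟩ => ⟨hm, Nat.even_of_odd_choose hn hodd, hodd⟩⟩
  have hhalf := Nat.two_mul_card_oddChooseIndices_filter_lt (q := q) (by omega)
  rw [Nat.card_oddChooseIndices] at hhalf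
  rw [hset]
  rcases h : (Nat.digits 2 (2 * q)).count 1 with _ | c
  · rw [h] at hhalf; omega
  · rw [h, pow_succ'] at hhalf
    rw [add_tsub_cancel_right]
    omega
end

section
/- Let k be a field of characteristic ≠ 2 and n a positive integer divisible by 4. Then the diagonal symmetric bilinear forms φ_even = ⟨C(n,m) : 0 ≤ m < n/2, m even⟩ and φ_odd = ⟨C(n,m) : 0 ≤ m < n/2, m odd⟩ over k are isomorphic (as symmetric bilinear forms, possibly degenerate). -/
/-!
Let `K` be the Krawtchouk matrix of order `n`: `K j m` is the coefficient of `X ^ m` in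
`(1 - X) ^ j * (1 + X) ^ (n - j)`. Homogenizing gives
`∑ m, K j m * a ^ m * b ^ (n - m) = (b - a) ^ j * (b + a) ^ (n - j)`, from which follow
`K * K = 2 ^ n`, the reflections `K (n - j) m = (-1) ^ m * K j m` and
`K j (n - m) = (-1) ^ j * K j m`, and the symmetry `C(n,j) * K j m = C(n,m) * K m j`.

For `n = 4t` let `N` be the block of `K` with rows `2i` and columns `2r + 1`, and `M` the block
with rows `2r + 1` and columns `2i` (`i, r < t`). Isolating the odd `m` in `K * K = 2 ^ n` with
the signed sum `∑ m, (-1) ^ m * K j m * K m s`, and then folding `m ↦ n - m`, gives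
`N * M = 4 ^ (2t - 1)`. The symmetry says `diag(C(n,2i)) * N = Mᵀ * diag(C(n,2r+1))`. After
scaling by `2 ^ (2t - 1)`, `N` is invertible with `Nᵀ * diag(C(n,2i)) * N = diag(C(n,2r+1))`.
-/

open Polynomial Finset

lemma Polynomial.aeval_homogenize {R A : Type*} [CommSemiring R] [CommSemiring A] [Algebra R A]
    (p : R[X]) (n : ℕ) (g : Fin 2 → A) :
    MvPolynomial.aeval g (p.homogenize n) =
      ∑ m ∈ range (n + 1), algebraMap R A (p.coeff m) * g 0 ^ m * g 1 ^ (n - m) := by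
  simp only [homogenize, map_sum, Finset.Nat.sum_antidiagonal_eq_sum_range_succ_mk,
    MvPolynomial.aeval_monomial]
  refine Finset.sum_congr rfl fun m _ ↦ ?_
  rw [Finsupp.update_eq_add_single, Finsupp.prod_add_index',
    Finsupp.prod_single_index, Finsupp.prod_single_index]
  · ring
  all_goals simp_all [pow_add]

noncomputable def krawtchouk (n j m : ℕ) : ℤ :=
  ((1 - X) ^ j * (1 + X) ^ (n - j) : ℤ[X]).coeff m

lemma homogenize_one_sub_X_pow_mul_one_add_X_pow {n j : ℕ} (hj : j ≤ n) :
    ((1 - X) ^ j * (1 + X) ^ (n - j) : ℤ[X]).homogenize n =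
      (.X 1 - .X 0) ^ j * (.X 1 + .X 0) ^ (n - j) := by
  apply homogenize_eq_of_isHomogeneous
  · open MvPolynomial in
    simpa [Nat.add_sub_cancel' hj] using
      (((isHomogeneous_X ℤ 1).sub (isHomogeneous_X ℤ 0)).pow j).mul
        (((isHomogeneous_X ℤ 1).add (isHomogeneous_X ℤ 0)).pow (n - j))
  · simp [add_comm]

theorem sum_krawtchouk_mul_pow_mul_pow {R : Type*} [CommRing R] {n j : ℕ} (hj : j ≤ n)
    (a b : R) :
    ∑ m ∈ range (n + 1), (krawtchouk n j m : R) * a ^ m * b ^ (n - m) =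
      (b - a) ^ j * (b + a) ^ (n - j) := by
  have h := congrArg (MvPolynomial.aeval ![a, b]) (homogenize_one_sub_X_pow_mul_one_add_X_pow hj)
  simpa [aeval_homogenize, krawtchouk] using h

lemma coeff_one_sub_X_pow_mul_one_add_X_pow (n j m : ℕ) :
    ((1 - X) ^ j * (1 + X) ^ (n - j) : ℤ[X][X]).coeff m = C (krawtchouk n j m) := by
  have h : ((1 - X) ^ j * (1 + X) ^ (n - j) : ℤ[X]).map C =
      ((1 - X) ^ j * (1 + X) ^ (n - j) : ℤ[X][X]) := by simp
  rw [← h, coeff_map, krawtchouk]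

/-- Both sides are the coefficient of `x ^ j * y ^ m` in `(1 + x + y - x * y) ^ n`. -/
theorem choose_mul_krawtchouk_comm {n j m : ℕ} (hj : j ≤ n) (hm : m ≤ n) :
    (n.choose j : ℤ) * krawtchouk n j m = n.choose m * krawtchouk n m j := by
  have hF₁ : (C X * (1 - X) + (1 + X)) ^ n = ∑ i ∈ range (n + 1),
      C (C (n.choose i : ℤ) * X ^ i) * ((1 - X) ^ i * (1 + X) ^ (n - i) : ℤ[X][X]) := by
    rw [add_pow]
    refine Finset.sum_congr rfl fun i _ ↦ ?_
    rw [mul_pow]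
    simp only [map_mul, map_pow, map_natCast]
    ring
  have hF₂ : (C X * (1 - X) + (1 + X)) ^ n = ∑ i ∈ range (n + 1),
      C (C (n.choose i : ℤ) * ((1 - X) ^ i * (1 + X) ^ (n - i))) * (X ^ i : ℤ[X][X]) := by
    rw [show (C X * (1 - X) + (1 + X) : ℤ[X][X]) = X * (1 - C X) + (1 + C X) by ring, add_pow]
    refine Finset.sum_congr rfl fun i _ ↦ ?_
    rw [mul_pow]
    simp only [map_mul, map_pow, map_natCast, map_sub, map_add, map_one]
    ring
  have h := congrArg (fun p : ℤ[X][X] ↦ (p.coeff m).coeff j) (hF₁.symm.trans hF₂)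
  simp only [finsetSum_coeff, coeff_C_mul, coeff_one_sub_X_pow_mul_one_add_X_pow, coeff_mul_C,
    coeff_X_pow, mul_ite, mul_one, mul_zero, apply_ite (coeff · j), coeff_zero] at h
  simpa [Nat.lt_succ_iff, hj, hm, krawtchouk] using h

theorem krawtchouk_sub_left {n j m : ℕ} (hj : j ≤ n) (hm : m ≤ n) :
    krawtchouk n (n - j) m = (-1) ^ m * krawtchouk n j m := by
  have h := congrArg (coeff · m) (sum_krawtchouk_mul_pow_mul_pow (R := ℤ[X]) hj (-X) 1)
  have hsub : (1 - -X : ℤ[X]) ^ j * (1 + -X) ^ (n - j) =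
      (1 - X) ^ (n - j) * (1 + X) ^ (n - (n - j)) := by
    rw [Nat.sub_sub_self hj]; ring
  have hterm (i : ℕ) : (krawtchouk n j i : ℤ[X]) * (-X) ^ i * 1 ^ (n - i) =
      C (krawtchouk n j i * (-1) ^ i) * X ^ i := by
    rw [neg_pow, one_pow, mul_one, map_mul, map_pow, map_neg, map_one, eq_intCast]
    ring
  simp only [hsub, hterm, finsetSum_coeff, coeff_C_mul_X_pow] at h
  simpa [krawtchouk, Nat.lt_succ_iff, hm, mul_comm] using h.symm

theorem krawtchouk_sub_right {n j m : ℕ} (hj : j ≤ n) (hm : m ≤ n) :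
    krawtchouk n j (n - m) = (-1) ^ j * krawtchouk n j m := by
  have h := congrArg (coeff · (n - m)) (sum_krawtchouk_mul_pow_mul_pow (R := ℤ[X]) hj 1 X)
  have hsub : (X - 1 : ℤ[X]) ^ j * (X + 1) ^ (n - j) =
      C ((-1) ^ j) * ((1 - X) ^ j * (1 + X) ^ (n - j)) := by
    rw [show (X - 1 : ℤ[X]) = -1 * (1 - X) by ring, mul_pow, map_pow, map_neg, map_one]; ring
  have hterm (i : ℕ) : (krawtchouk n j i : ℤ[X]) * 1 ^ i * X ^ (n - i) =
      C (krawtchouk n j i) * X ^ (n - i) := by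
    simp
  simp only [hsub, hterm, finsetSum_coeff, coeff_C_mul, coeff_X_pow, mul_ite, mul_one,
    mul_zero] at h
  rw [Finset.sum_eq_single_of_mem m (by simpa [Nat.lt_succ_iff]) fun i hi him ↦
    if_neg (by simp at hi; omega), if_pos rfl] at h
  rw [h, ← mul_assoc, ← mul_pow, neg_one_mul, neg_neg, one_pow, one_mul, krawtchouk]

theorem sum_krawtchouk_mul_krawtchouk {n j : ℕ} (hj : j ≤ n) (s : ℕ) :
    ∑ m ∈ range (n + 1), krawtchouk n j m * krawtchouk n m s = if s = j then 2 ^ n else 0 := by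
  have h := congrArg (coeff · s) (sum_krawtchouk_mul_pow_mul_pow (R := ℤ[X]) hj (1 - X) (1 + X))
  have hsub : (1 + X - (1 - X) : ℤ[X]) ^ j * (1 + X + (1 - X)) ^ (n - j) = C (2 ^ n) * X ^ j := by
    rw [show (1 + X - (1 - X) : ℤ[X]) = C 2 * X by rw [map_ofNat]; ring,
      show (1 + X + (1 - X) : ℤ[X]) = C 2 by rw [map_ofNat]; ring, mul_pow, ← map_pow, ← map_pow,
      mul_right_comm, ← map_mul, ← pow_add, Nat.add_sub_cancel' hj]
  simp only [hsub, finsetSum_coeff, mul_assoc, coeff_intCast_mul, coeff_C_mul_X_pow] at h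
  simpa [krawtchouk] using h

theorem sum_neg_one_pow_mul_krawtchouk_mul_krawtchouk {n j s : ℕ} (hj : j ≤ n) (hs : s ≤ n) :
    ∑ m ∈ range (n + 1), (-1) ^ m * (krawtchouk n j m * krawtchouk n m s) =
      if n - s = j then 2 ^ n else 0 := by
  rw [← sum_krawtchouk_mul_krawtchouk hj]
  refine Finset.sum_congr rfl fun m hm ↦ ?_
  rw [krawtchouk_sub_right (Nat.lt_succ_iff.mp (mem_range.mp hm)) hs]
  ring

theorem sum_range_two_mul_add_one_sub_neg_one_pow_mul {R : Type*} [CommRing R] (f : ℕ → R)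
    (N : ℕ) :
    ∑ m ∈ range (2 * N + 1), (f m - (-1) ^ m * f m) = 2 * ∑ a ∈ range N, f (2 * a + 1) := by
  induction N with
  | zero => simp
  | succ N ih =>
    rw [show 2 * (N + 1) + 1 = 2 * N + 1 + 1 + 1 by ring, sum_range_succ, sum_range_succ, ih,
      sum_range_succ, Odd.neg_one_pow ⟨N, rfl⟩, Even.neg_one_pow ⟨N + 1, by ring⟩]
    ring

theorem sum_range_two_mul_eq_two_nsmul_of_symm {M : Type*} [AddCommMonoid M] (g : ℕ → M)
    (t : ℕ) (h : ∀ a < t, g (2 * t - 1 - a) = g a) :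
    ∑ a ∈ range (2 * t), g a = 2 • ∑ a ∈ range t, g a := by
  rw [two_mul, sum_range_add, two_nsmul, ← sum_range_reflect (fun a ↦ g (t + a))]
  congr 1
  refine Finset.sum_congr rfl fun a ha ↦ ?_
  rw [← h a (mem_range.mp ha)]
  congr 1
  have := mem_range.mp ha
  omega

theorem sum_krawtchouk_mul_krawtchouk_odd {t i i' : ℕ} (hi : i < t) (hi' : i' < t) :
    ∑ r ∈ range t,
        krawtchouk (4 * t) (2 * i) (2 * r + 1) * krawtchouk (4 * t) (2 * r + 1) (2 * i') =
      if i = i' then 4 ^ (2 * t - 1) else 0 := by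
  set n := 4 * t
  set G : ℕ → ℤ := fun m ↦ krawtchouk n (2 * i) m * krawtchouk n m (2 * i')
  have hsymm (m : ℕ) (hm : m ≤ n) : G (n - m) = G m := by
    simp only [G, krawtchouk_sub_right (by omega : 2 * i ≤ n) hm,
      krawtchouk_sub_left hm (by omega : 2 * i' ≤ n), Even.neg_one_pow ⟨i, two_mul i⟩,
      Even.neg_one_pow ⟨i', two_mul i'⟩, one_mul]
  have hodd : 2 * ∑ a ∈ range (2 * t), G (2 * a + 1) = if i = i' then 2 ^ n else 0 := by
    rw [← sum_range_two_mul_add_one_sub_neg_one_pow_mul, sum_sub_distrib,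
      show 2 * (2 * t) + 1 = n + 1 by omega, sum_krawtchouk_mul_krawtchouk (by omega),
      sum_neg_one_pow_mul_krawtchouk_mul_krawtchouk (by omega) (by omega),
      if_neg (show ¬n - 2 * i' = 2 * i by omega), sub_zero]
    exact if_congr (by omega) rfl rfl
  have hfold : ∑ a ∈ range (2 * t), G (2 * a + 1) = 2 • ∑ a ∈ range t, G (2 * a + 1) :=
    sum_range_two_mul_eq_two_nsmul_of_symm _ t fun a ha ↦ by
      rw [← hsymm (2 * a + 1) (by omega)]
      congr 1
      omega
  have h4 : (2 : ℤ) ^ n = 4 * 4 ^ (2 * t - 1) := by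
    rw [← pow_succ', show n = 2 * (2 * t - 1 + 1) by omega, pow_mul]
    norm_num
  rw [hfold, two_nsmul, h4] at hodd
  split_ifs at hodd ⊢ <;> linarith

namespace Matrix

variable {R ι κ : Type*}

theorem dotProduct_diagonal_mulVec [CommSemiring R] [Fintype ι] [DecidableEq ι] (d u v : ι → R) :
    u ⬝ᵥ (diagonal d *ᵥ v) = ∑ i, d i * u i * v i := by
  simp only [dotProduct, mulVec_diagonal]
  exact Finset.sum_congr rfl fun i _ ↦ by ring

theorem sum_mul_mulVec_mul_mulVec_of_transpose_mul_diagonal_mul [CommSemiring R] [Fintype ι]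
    [Fintype κ] [DecidableEq ι] [DecidableEq κ] {N : Matrix ι κ R} {d : ι → R} {d' : κ → R}
    (h : Nᵀ * diagonal d * N = diagonal d') (x y : κ → R) :
    ∑ i, d i * (N *ᵥ x) i * (N *ᵥ y) i = ∑ r, d' r * x r * y r := by
  rw [← dotProduct_diagonal_mulVec, ← dotProduct_diagonal_mulVec, ← h, ← mulVec_mulVec,
    ← mulVec_mulVec, dotProduct_mulVec x, vecMul_transpose]

theorem exists_linearEquiv_sum_mul_mul_eq_of_mul_eq_one [CommRing R] [Fintype ι]
    [DecidableEq ι] {N M : Matrix ι ι R} {d d' : ι → R} (hNM : N * M = 1)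
    (hdiag : diagonal d * N = Mᵀ * diagonal d') :
    ∃ e : (ι → R) ≃ₗ[R] (ι → R),
      ∀ x y : ι → R, ∑ i, d i * e x i * e y i = ∑ i, d' i * x i * y i := by
  have h : Nᵀ * diagonal d * N = diagonal d' := by
    rw [mul_assoc, hdiag, ← mul_assoc, ← transpose_mul, mul_eq_one_comm.mp hNM, transpose_one,
      one_mul]
  exact ⟨toLinearEquiv' N (invertibleOfRightInverse N M hNM),
    sum_mul_mulVec_mul_mulVec_of_transpose_mul_diagonal_mul h⟩

end Matrix

open Matrix

section Field

variable (k : Type*) [Field k]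

noncomputable def krawtchoukEvenOdd (t : ℕ) : Matrix (Fin t) (Fin t) k :=
  of fun i r ↦ krawtchouk (4 * t) (2 * i) (2 * r + 1) / 2 ^ (2 * t - 1)

noncomputable def krawtchoukOddEven (t : ℕ) : Matrix (Fin t) (Fin t) k :=
  of fun r i ↦ krawtchouk (4 * t) (2 * r + 1) (2 * i) / 2 ^ (2 * t - 1)

variable {k}

theorem krawtchoukEvenOdd_mul_krawtchoukOddEven (hchar : (2 : k) ≠ 0) (t : ℕ) :
    krawtchoukEvenOdd k t * krawtchoukOddEven k t = 1 := by
  have h4 : (4 : k) ≠ 0 := by simpa [← two_add_two_eq_four, ← two_mul] using hchar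
  ext i i'
  have h := congrArg (Int.cast : ℤ → k) (sum_krawtchouk_mul_krawtchouk_odd i.2 i'.2)
  rw [← Fin.sum_univ_eq_sum_range (fun r ↦ krawtchouk _ _ (2 * r + 1) * _)] at h
  push_cast at h
  simp only [mul_apply, one_apply, krawtchoukEvenOdd, krawtchoukOddEven, of_apply, Fin.ext_iff]
  rw [Finset.sum_congr rfl fun r _ ↦ div_mul_div_comm _ _ _ _, ← Finset.sum_div, h, ← sq,
    ← pow_mul, pow_mul', show (2 : k) ^ 2 = 4 by norm_num]
  split_ifs
  exacts [div_self (pow_ne_zero _ h4), zero_div _]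

theorem diagonal_choose_mul_krawtchoukEvenOdd (t : ℕ) :
    diagonal (fun i : Fin t ↦ ((4 * t).choose (2 * i) : k)) * krawtchoukEvenOdd k t =
      (krawtchoukOddEven k t)ᵀ * diagonal (fun r : Fin t ↦ ((4 * t).choose (2 * r + 1) : k)) := by
  ext i r
  have h := congrArg (Int.cast : ℤ → k)
    (choose_mul_krawtchouk_comm (n := 4 * t) (j := 2 * i) (m := 2 * r + 1) (by omega) (by omega))
  push_cast at h
  simp only [diagonal_mul, mul_diagonal, transpose_apply, krawtchoukEvenOdd, krawtchoukOddEven,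
    of_apply]
  rw [mul_div_assoc', h, mul_comm, mul_div_right_comm]

end Field

theorem phi_even_iso_phi_odd_four_dvd_general (k : Type*) [Field k]
    (hchar : (2 : k) ≠ 0) (n : ℕ) (h4 : 4 ∣ n) :
    ∃ e : (Fin (n / 4) → k) ≃ₗ[k] (Fin (n / 4) → k),
      ∀ x y : Fin (n / 4) → k,
        ∑ i : Fin (n / 4), (n.choose (2 * (i : ℕ)) : k) * e x i * e y i =
          ∑ i : Fin (n / 4), (n.choose (2 * (i : ℕ) + 1) : k) * x i * y i := by
  obtain ⟨t, rfl⟩ := h4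
  rw [Nat.mul_div_cancel_left t four_pos]
  exact exists_linearEquiv_sum_mul_mul_eq_of_mul_eq_one
    (krawtchoukEvenOdd_mul_krawtchoukOddEven hchar t) (diagonal_choose_mul_krawtchoukEvenOdd t)

/-- Theorem B, case `4 ∣ n`: over a field of characteristic ≠ 2, the diagonal
symmetric bilinear forms `⟨C(n,m) : 0 ≤ m < n/2, m even⟩` and
`⟨C(n,m) : 0 ≤ m < n/2, m odd⟩` are isomorphic. -/
theorem phi_even_iso_phi_odd_four_dvd (k : Type*) [Field k]
    (hchar : (2 : k) ≠ 0) (n : ℕ) (hn : 0 < n) (h4 : 4 ∣ n) :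
    ∃ e : (Fin (n / 4) → k) ≃ₗ[k] (Fin (n / 4) → k),
      ∀ x y : Fin (n / 4) → k,
        ∑ i : Fin (n / 4), (n.choose (2 * (i : ℕ)) : k) * e x i * e y i =
          ∑ i : Fin (n / 4), (n.choose (2 * (i : ℕ) + 1) : k) * x i * y i :=
  phi_even_iso_phi_odd_four_dvd_general k hchar n h4
end

section
/- Over the rationals, for n = 16, the diagonal quadratic forms ⟨1, 120, 1820, 8008⟩ and ⟨16, 560, 4368, 11440⟩ are isomorphic (equal in the Witt ring, and of the same dimension and discriminant class). -/
noncomputable def phiM : Matrix (Fin 4) (Fin 4) ℚ :=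
  !![4, 0, 0, 0;
     0, 7/24, 91/16, 143/48;
     0, 1/3, 15/58, -341/174;
     0, 5/24, -99/464, 905/1392]

noncomputable def phiMinv : Matrix (Fin 4) (Fin 4) ℚ :=
  !![1/4, 0, 0, 0;
     0, 1/16, 13/12, 143/48;
     0, 5/32, 25/232, -363/928;
     0, 1/32, -217/696, 1267/2784]

lemma phiM_mul_inv : phiM * phiMinv = 1 := by
  ext i j
  fin_cases i <;> fin_cases j <;>
    simp [phiM, phiMinv, Matrix.mul_apply, Fin.sum_univ_four, Matrix.one_apply, Matrix.vecHead, Matrix.vecTail] <;> norm_num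

lemma phiMinv_mul : phiMinv * phiM = 1 := by
  ext i j
  fin_cases i <;> fin_cases j <;>
    simp [phiM, phiMinv, Matrix.mul_apply, Fin.sum_univ_four, Matrix.one_apply, Matrix.vecHead, Matrix.vecTail] <;> norm_num

/-- Over `ℚ`, the diagonal quadratic forms `⟨1, 120, 1820, 8008⟩` and
`⟨16, 560, 4368, 11440⟩` are isomorphic. -/
theorem phi_sixteen_iso :
    ∃ e : (Fin 4 → ℚ) ≃ₗ[ℚ] (Fin 4 → ℚ),
      ∀ x : Fin 4 → ℚ,
        1 * (e x 0) ^ 2 + 120 * (e x 1) ^ 2 + 1820 * (e x 2) ^ 2 + 8008 * (e x 3) ^ 2 =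
          16 * (x 0) ^ 2 + 560 * (x 1) ^ 2 + 4368 * (x 2) ^ 2 + 11440 * (x 3) ^ 2 := by
  refine ⟨LinearEquiv.ofLinear phiM.mulVecLin phiMinv.mulVecLin ?_ ?_, ?_⟩
  · rw [← Matrix.mulVecLin_mul, phiM_mul_inv, Matrix.mulVecLin_one]
  · rw [← Matrix.mulVecLin_mul, phiMinv_mul, Matrix.mulVecLin_one]
  · intro x
    simp [phiM, Matrix.mulVec, dotProduct, Fin.sum_univ_four]
    ring
end

section
/- Let k be a field of characteristic 2 and n an even positive integer. Then the number of nonzero diagonal entries of the form ⟨C(n,m) : 0 ≤ m < n/2, m even⟩ over k is 2^{s(n)-1}, and each nonzero entry equals 1 in k; hence its nondegenerate part is isomorphic to the 2^{s(n)-1}-fold orthogonal sum of ⟨1⟩. -/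
instance : Fact (Nat.Prime 2) := ⟨Nat.prime_two⟩

private lemma lucas_step (N J : ℕ) :
    N.choose J % 2 = ((N % 2).choose (J % 2) * (N / 2).choose (J / 2)) % 2 :=
  Choose.choose_modEq_choose_mod_mul_choose_div_nat (p := 2)

private lemma ch_ee (m j : ℕ) : (2 * m).choose (2 * j) % 2 = m.choose j % 2 := by
  rw [lucas_step]; simp [Nat.mul_div_cancel_left, Nat.mul_mod_right]

private lemma ch_eo (m j : ℕ) : (2 * m).choose (2 * j + 1) % 2 = 0 := by
  rw [lucas_step]
  have h1 : (2 * j + 1) % 2 = 1 := by omega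
  simp [h1, Nat.mul_mod_right]

private lemma ch_oe (m j : ℕ) : (2 * m + 1).choose (2 * j) % 2 = m.choose j % 2 := by
  rw [lucas_step]
  have h1 : (2 * m + 1) % 2 = 1 := by omega
  have h2 : (2 * m + 1) / 2 = m := by omega
  simp [h1, h2, Nat.mul_mod_right]

private lemma ch_oo (m j : ℕ) : (2 * m + 1).choose (2 * j + 1) % 2 = m.choose j % 2 := by
  rw [lucas_step]
  have h1 : (2 * m + 1) % 2 = 1 := by omega
  have h2 : (2 * m + 1) / 2 = m := by omega
  have h3 : (2 * j + 1) % 2 = 1 := by omega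
  have h4 : (2 * j + 1) / 2 = j := by omega
  simp [h1, h2, h3, h4]

private lemma even2 {n : ℕ} (h : Even n) : ∃ m, n = 2 * m := by
  rw [Nat.even_iff] at h; exact ⟨n / 2, by omega⟩

private lemma odd2 {n : ℕ} (h : ¬ Even n) : ∃ m, n = 2 * m + 1 := by
  rw [Nat.even_iff] at h; exact ⟨n / 2, by omega⟩

private lemma even_of_choose_odd {n j : ℕ} (hn : Even n) (h : n.choose j % 2 = 1) :
    Even j := by
  obtain ⟨m, rfl⟩ := even2 hn
  by_contra hodd
  obtain ⟨i, rfl⟩ : ∃ i, j = 2 * i + 1 := by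
    rw [Nat.even_iff] at hodd; exact ⟨j / 2, by omega⟩
  rw [ch_eo] at h; omega

private lemma countA (n : ℕ) :
    ((Finset.range (n + 1)).filter (fun m => n.choose m % 2 = 1)).card
      = 2 ^ ((Nat.digits 2 n).count 1) := by
  induction n using Nat.strong_induction_on with
  | _ n ih =>
    rcases Nat.even_or_odd n with he | ho
    · obtain ⟨m, rfl⟩ := even2 he
      rcases Nat.eq_zero_or_pos m with rfl | hm
      · simp [Finset.filter_singleton]
      · have himg : (Finset.range (2 * m + 1)).filter (fun j => (2 * m).choose j % 2 = 1)
            = ((Finset.range (m + 1)).filter (fun i => m.choose i % 2 = 1)).image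
                (fun i => 2 * i) := by
          ext j
          simp only [Finset.mem_image, Finset.mem_filter, Finset.mem_range]
          constructor
          · rintro ⟨hj, hodd⟩
            obtain ⟨i, rfl⟩ := even2 (even_of_choose_odd ⟨m, by ring⟩ hodd)
            rw [ch_ee] at hodd
            exact ⟨i, ⟨by omega, hodd⟩, rfl⟩
          · rintro ⟨i, ⟨hi, hodd⟩, rfl⟩
            exact ⟨by omega, by rw [ch_ee]; exact hodd⟩
        rw [himg, Finset.card_image_of_injective _ (fun a b h => by omega),
          ih m (by omega)]
        have hd : Nat.digits 2 (2 * m) = (2 * m) % 2 :: Nat.digits 2 ((2 * m) / 2) :=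
          Nat.digits_def' (by norm_num) (by omega)
        rw [hd]
        have : (2 * m) % 2 = 0 := by omega
        rw [this, Nat.mul_div_cancel_left _ (by norm_num), List.count_cons]
        simp
    · obtain ⟨m, rfl⟩ := ho
      have himg : (Finset.range (2 * m + 1 + 1)).filter
            (fun j => (2 * m + 1).choose j % 2 = 1)
          = ((Finset.range (m + 1)).filter (fun i => m.choose i % 2 = 1)).image
              (fun i => 2 * i)
            ∪ ((Finset.range (m + 1)).filter (fun i => m.choose i % 2 = 1)).image
              (fun i => 2 * i + 1) := by
        ext j
        simp only [Finset.mem_union, Finset.mem_image, Finset.mem_filter, Finset.mem_range]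
        constructor
        · rintro ⟨hj, hodd⟩
          rcases Nat.even_or_odd j with hje | hjo
          · obtain ⟨i, rfl⟩ := even2 hje
            rw [ch_oe] at hodd
            exact Or.inl ⟨i, ⟨by omega, hodd⟩, rfl⟩
          · obtain ⟨i, rfl⟩ := hjo
            rw [ch_oo] at hodd
            exact Or.inr ⟨i, ⟨by omega, hodd⟩, rfl⟩
        · rintro (⟨i, ⟨hi, hodd⟩, rfl⟩ | ⟨i, ⟨hi, hodd⟩, rfl⟩)
          · exact ⟨by omega, by rw [ch_oe]; exact hodd⟩
          · exact ⟨by omega, by rw [ch_oo]; exact hodd⟩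
      rw [himg, Finset.card_union_of_disjoint, Finset.card_image_of_injective _
        (fun a b h => by omega), Finset.card_image_of_injective _ (fun a b h => by omega),
        ih m (by omega)]
      · have hd : Nat.digits 2 (2 * m + 1)
            = (2 * m + 1) % 2 :: Nat.digits 2 ((2 * m + 1) / 2) :=
          Nat.digits_def' (by norm_num) (by omega)
        rw [hd]
        have h1 : (2 * m + 1) % 2 = 1 := by omega
        have h2 : (2 * m + 1) / 2 = m := by omega
        rw [h1, h2, List.count_cons]
        simp [pow_succ]
        ring
      · rw [Finset.disjoint_left]
        intro a ha hb
        simp only [Finset.mem_image, Finset.mem_filter] at ha hb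
        obtain ⟨i, _, rfl⟩ := ha
        obtain ⟨i', _, h⟩ := hb
        omega

private lemma central_even : ∀ m : ℕ, 0 < m → (2 * m).choose m % 2 = 0 := by
  intro m
  induction m using Nat.strong_induction_on with
  | _ m ih =>
    intro hm
    rcases Nat.even_or_odd m with he | ho
    · obtain ⟨i, rfl⟩ := even2 he
      have : 2 * (2 * i) = 2 * i * 2 := by ring
      have h := ch_ee (2 * i) i
      rw [show 2 * (2 * i) = 2 * (2 * i) from rfl] at h
      rw [h]
      exact ih i (by omega) (by omega)
    · obtain ⟨i, rfl⟩ := ho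
      have h := ch_eo (2 * i + 1) i
      rw [show 2 * (2 * i + 1) = 2 * (2 * i + 1) from rfl] at h
      exact h

private lemma s_pos {n : ℕ} (hn : 0 < n) : 0 < (Nat.digits 2 n).count 1 := by
  rw [List.count_pos_iff]
  have hne : Nat.digits 2 n ≠ [] := Nat.digits_ne_nil_iff_ne_zero.mpr (by omega)
  have hlast := Nat.getLast_digit_ne_zero 2 (show n ≠ 0 by omega)
  have hmem : (Nat.digits 2 n).getLast hne ∈ Nat.digits 2 n := List.getLast_mem hne
  have hlt : (Nat.digits 2 n).getLast hne < 2 := Nat.digits_lt_base (by norm_num) hmem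
  have : (Nat.digits 2 n).getLast hne = 1 := by omega
  rwa [this] at hmem

private lemma countT (n : ℕ) (hn : Even n) (hpos : 0 < n) :
    ((Finset.range (n / 2)).filter (fun m => n.choose m % 2 = 1)).card
      = 2 ^ ((Nat.digits 2 n).count 1 - 1) := by
  obtain ⟨m, rfl⟩ := even2 hn
  have hm : 0 < m := by omega
  have hhalf : 2 * m / 2 = m := by omega
  set A := (Finset.range (2 * m + 1)).filter (fun j => (2 * m).choose j % 2 = 1) with hA
  set T := (Finset.range (2 * m / 2)).filter (fun j => (2 * m).choose j % 2 = 1) with hT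
  have hcent : (2 * m).choose m % 2 = 0 := central_even m hm
  -- T = A.filter (· < m)
  have hTA : T = A.filter (fun j => j < m) := by
    ext j
    simp only [hT, hA, Finset.mem_filter, Finset.mem_range, hhalf]
    constructor
    · rintro ⟨h1, h2⟩; exact ⟨⟨by omega, h2⟩, h1⟩
    · rintro ⟨⟨_, h2⟩, h3⟩; exact ⟨by omega, h2⟩
  have hUA : A.filter (fun j => ¬ j < m) = A.filter (fun j => m < j) := by
    ext j
    simp only [Finset.mem_filter, hA, Finset.mem_range]
    constructor
    · rintro ⟨⟨h1, h2⟩, h3⟩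
      refine ⟨⟨h1, h2⟩, ?_⟩
      rcases Nat.lt_or_ge m j with h | h
      · exact h
      · exfalso; have : j = m := by omega
        rw [this] at h2; omega
    · rintro ⟨h1, h2⟩; exact ⟨h1, by omega⟩
  have hsplit : T.card + (A.filter (fun j => m < j)).card = A.card := by
    rw [hTA, ← hUA]
    exact Finset.card_filter_add_card_filter_not _
  -- bijection T ≃ U via j ↦ 2m - j
  have hbij : (A.filter (fun j => m < j)).card = T.card := by
    apply Finset.card_bij' (fun j _ => 2 * m - j) (fun j _ => 2 * m - j)
    · intro j hj
      simp only [Finset.mem_filter, hA, Finset.mem_range] at hj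
      obtain ⟨⟨h1, h2⟩, h3⟩ := hj
      simp only [hT, Finset.mem_filter, Finset.mem_range, hhalf]
      constructor
      · omega
      · rw [Nat.choose_symm (by omega)]; exact h2
    · intro j hj
      simp only [hT, Finset.mem_filter, Finset.mem_range, hhalf] at hj
      obtain ⟨h1, h2⟩ := hj
      simp only [Finset.mem_filter, hA, Finset.mem_range]
      refine ⟨⟨by omega, ?_⟩, by omega⟩
      rw [Nat.choose_symm (by omega)]; exact h2
    · intro j hj
      simp only [Finset.mem_filter, hA, Finset.mem_range] at hj
      omega
    · intro j hj
      simp only [hT, Finset.mem_filter, Finset.mem_range, hhalf] at hj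
      omega
  have hAcard : A.card = 2 ^ ((Nat.digits 2 (2 * m)).count 1) := countA (2 * m)
  have hs := s_pos (show 0 < 2 * m by omega)
  have h2T : 2 * T.card = 2 ^ ((Nat.digits 2 (2 * m)).count 1) := by
    rw [← hAcard, ← hsplit, hbij]; ring
  have : 2 ^ ((Nat.digits 2 (2 * m)).count 1)
      = 2 * 2 ^ ((Nat.digits 2 (2 * m)).count 1 - 1) := by
    rw [← pow_succ']
    congr 1
    omega
  omega

open scoped Classical

/-- Theorem B in characteristic 2: for `n` even and positive, the diagonal form
`⟨C(n,m) : 0 ≤ m < n/2, m even⟩` over a field of characteristic 2 has exactly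
`2^(s(n)-1)` nonzero entries, each equal to `1`; hence its nondegenerate part is
the `2^(s(n)-1)`-fold orthogonal sum of `⟨1⟩`. -/
theorem phi_even_char_two (k : Type*) [Field k] [CharP k 2]
    (n : ℕ) (hn : Even n) (hpos : 0 < n) :
    ((Finset.range (n / 2)).filter
        (fun m => Even m ∧ (n.choose m : k) ≠ 0)).card =
        2 ^ ((Nat.digits 2 n).count 1 - 1) ∧
    (∀ m : ℕ, m < n / 2 → Even m → (n.choose m : k) ≠ 0 → (n.choose m : k) = 1) ∧
    ∃ e : ({m // m ∈ (Finset.range (n / 2)).filter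
            (fun m => Even m ∧ (n.choose m : k) ≠ 0)} → k) ≃ₗ[k]
          (Fin (2 ^ ((Nat.digits 2 n).count 1 - 1)) → k),
      ∀ x y,
        ∑ i : {m // m ∈ (Finset.range (n / 2)).filter
            (fun m => Even m ∧ (n.choose m : k) ≠ 0)},
          (n.choose (i : ℕ) : k) * x i * y i =
        ∑ j : Fin (2 ^ ((Nat.digits 2 n).count 1 - 1)), (1 : k) * e x j * e y j := by
  have hmod : ∀ m : ℕ, ((n.choose m : k) ≠ 0 ↔ n.choose m % 2 = 1) := by
    intro m
    rw [ne_eq, CharP.cast_eq_zero_iff k 2]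
    omega
  -- the filter sets coincide
  have hfeq : (Finset.range (n / 2)).filter (fun m => Even m ∧ (n.choose m : k) ≠ 0)
      = (Finset.range (n / 2)).filter (fun m => n.choose m % 2 = 1) := by
    ext m
    simp only [Finset.mem_filter, Finset.mem_range]
    constructor
    · rintro ⟨h1, _, h3⟩; exact ⟨h1, (hmod m).mp h3⟩
    · rintro ⟨h1, h2⟩
      exact ⟨h1, even_of_choose_odd hn h2, (hmod m).mpr h2⟩
  have part1 : ((Finset.range (n / 2)).filter
      (fun m => Even m ∧ (n.choose m : k) ≠ 0)).card
      = 2 ^ ((Nat.digits 2 n).count 1 - 1) := by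
    rw [hfeq]; exact countT n hn hpos
  have part2 : ∀ m : ℕ, m < n / 2 → Even m → (n.choose m : k) ≠ 0 →
      (n.choose m : k) = 1 := by
    intro m _ _ hne
    have h1 := (hmod m).mp hne
    have h2 : (2 : k) = 0 := by
      have := CharP.cast_eq_zero k 2
      exact_mod_cast this
    conv_lhs => rw [← Nat.mod_add_div (n.choose m) 2]
    push_cast
    rw [h1, h2]
    ring
  refine ⟨part1, part2, ?_⟩
  haveI : Fintype {m // m ∈ (Finset.range (n / 2)).filter
      (fun m => Even m ∧ (n.choose m : k) ≠ 0)} :=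
    Finset.Subtype.fintype _
  have hcard : Fintype.card {m // m ∈ (Finset.range (n / 2)).filter
      (fun m => Even m ∧ (n.choose m : k) ≠ 0)}
      = 2 ^ ((Nat.digits 2 n).count 1 - 1) := by
    exact (Fintype.card_coe _).trans part1
  let σ := Fintype.equivFinOfCardEq hcard
  refine ⟨LinearEquiv.funCongrLeft k k σ.symm, ?_⟩
  intro x y
  have hones : ∀ i : {m // m ∈ (Finset.range (n / 2)).filter
      (fun m => Even m ∧ (n.choose m : k) ≠ 0)}, (n.choose (i : ℕ) : k) = 1 := by
    intro i
    have hi := i.2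
    rw [Finset.mem_filter, Finset.mem_range] at hi
    exact part2 i hi.1 hi.2.1 hi.2.2
  have happ : ∀ (z : _) (j), (LinearEquiv.funCongrLeft k k σ.symm) z j = z (σ.symm j) :=
    fun z j => rfl
  simp only [happ, hones, one_mul]
  exact Finset.sum_equiv σ (by simp) (by simp)
end

section
/- Let n be an even positive integer and work over a field k of characteristic ≠ 2. Consider the quadratic form f on k^{n+1} given by f(Σ x_m e_m) = Σ_{ℓ+m=n} (-1)^ℓ C(n,ℓ) x_ℓ x_m (i.e., the form of the Gram matrix with antidiagonal entries (-1)^ℓ C(n,ℓ)). Then f is isomorphic to H ⊗ (φ_even ⊕ φ_odd) ⊕ ⟨(-1)^{n/2} C(n,n/2)⟩, where H is the hyperbolic plane ⟨1,-1⟩, φ_even = ⟨C(n,m) : 0 ≤ m < n/2, m even⟩, and φ_odd = ⟨C(n,m) : 0 ≤ m < n/2, m odd⟩. -/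
/-!
Since `n = 2h` is even, the coefficient `(-1)^ℓ C(n,ℓ)` is invariant under `ℓ ↦ n - ℓ`, so pairing
the coordinates `ℓ` and `n - ℓ` writes the form as `∑_{m<h} 2 (-1)^m C(n,m) x_m x_{n-m}` plus the
middle term `(-1)^h C(n,h) x_h²`. Each pair is a scaled hyperbolic plane:
`2 (-1)^m x_m x_{n-m} = u_m² - v_m²` for `u_m, v_m = x_m ± (-1)^m x_{n-m} / 2`, and this change of
coordinates is invertible because `2 ≠ 0`.
-/

namespace AntidiagonalForm

open Finset

variable (h : ℕ)

def lower (m : Fin h) : Fin (h + h + 1) := Fin.castLE (by omega) m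

def middle : Fin (h + h + 1) := ⟨h, by omega⟩

@[simp] lemma val_lower (m : Fin h) : (lower h m : ℕ) = m := rfl

@[simp] lemma val_middle : (middle h : ℕ) = h := rfl

lemma val_rev_lower (m : Fin h) : ((lower h m).rev : ℕ) = h + h - m := by
  simp only [Fin.val_rev, val_lower]; omega

lemma rev_middle : (middle h).rev = middle h := by
  ext; simp only [Fin.val_rev, val_middle]; omega

lemma eq_lower_or_eq_rev_lower_or_eq_middle (i : Fin (h + h + 1)) :
    (∃ m, i = lower h m) ∨ (∃ m, i = (lower h m).rev) ∨ i = middle h := by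
  rcases lt_trichotomy (i : ℕ) h with hi | hi | hi
  · exact Or.inl ⟨⟨i, hi⟩, Fin.ext rfl⟩
  · exact Or.inr (Or.inr (Fin.ext hi))
  · refine Or.inr (Or.inl ⟨⟨h + h - i, by omega⟩, Fin.ext ?_⟩)
    rw [val_rev_lower]; dsimp only; omega

lemma sum_univ_eq_sum_lower_add_middle {M : Type*} [AddCommMonoid M] (f : Fin (h + h + 1) → M) :
    ∑ i, f i = ∑ m : Fin h, (f (lower h m) + f (lower h m).rev) + f (middle h) := by
  have upper : ∑ m : Fin h, f (Fin.natAdd h m.succ) = ∑ m : Fin h, f (lower h m).rev := by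
    refine Fintype.sum_equiv Fin.revPerm _ _ fun m => congrArg f (Fin.ext ?_)
    rw [Fin.revPerm_apply, val_rev_lower, Fin.val_natAdd, Fin.val_succ, Fin.val_rev]
    omega
  refine (Fin.sum_univ_add (a := h) (b := h + 1) f).trans ?_
  rw [Fin.sum_univ_succ, upper, sum_add_distrib, add_comm (f _), ← add_assoc]
  rfl

lemma sum_mul_mul_rev {R : Type*} [CommSemiring R] (c x : Fin (h + h + 1) → R)
    (hc : ∀ i, c i.rev = c i) :
    ∑ i, c i * x i * x i.rev =
      ∑ m : Fin h, 2 * c (lower h m) * x (lower h m) * x (lower h m).rev +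
        c (middle h) * x (middle h) ^ 2 := by
  rw [sum_univ_eq_sum_lower_add_middle, rev_middle]
  congr 1
  · refine sum_congr rfl fun m _ => ?_
    rw [hc, Fin.rev_rev]; ring
  · ring

lemma neg_one_pow_mul_choose_rev {R : Type*} [Ring R] (i : Fin (h + h + 1)) :
    (-1 : R) ^ (i.rev : ℕ) * ((h + h).choose i.rev : R) = (-1) ^ (i : ℕ) * (h + h).choose i := by
  have hi : (i.rev : ℕ) = h + h - i := by rw [Fin.val_rev]; omega
  have hle : (i : ℕ) ≤ h + h := by omega
  rw [hi, Nat.choose_symm hle]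
  congr 1
  exact neg_one_pow_congr (by simp [Nat.even_sub hle])

variable (k : Type*) [Field k]

def hyperbolicCoords : (Fin (h + h + 1) → k) →ₗ[k] (Fin h → k) × (Fin h → k) × k :=
  (LinearMap.pi fun m => LinearMap.proj (lower h m) +
      ((-1) ^ (m : ℕ) / 2 : k) • LinearMap.proj (lower h m).rev).prod
    ((LinearMap.pi fun m => LinearMap.proj (lower h m) -
      ((-1) ^ (m : ℕ) / 2 : k) • LinearMap.proj (lower h m).rev).prod
    (LinearMap.proj (middle h)))

@[simp] lemma hyperbolicCoords_apply (x : Fin (h + h + 1) → k) :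
    hyperbolicCoords h k x =
      (fun m => x (lower h m) + (-1) ^ (m : ℕ) / 2 * x (lower h m).rev,
        fun m => x (lower h m) - (-1) ^ (m : ℕ) / 2 * x (lower h m).rev, x (middle h)) :=
  rfl

lemma hyperbolicCoords_injective (hchar : (2 : k) ≠ 0) :
    Function.Injective (hyperbolicCoords h k) := by
  rw [← LinearMap.ker_eq_bot, LinearMap.ker_eq_bot']
  intro x hx
  simp only [hyperbolicCoords_apply, Prod.mk_eq_zero, funext_iff, Pi.zero_apply] at hx
  obtain ⟨hplus, hminus, hmiddle⟩ := hx
  have hlower (m : Fin h) : x (lower h m) = 0 :=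
    mul_left_cancel₀ hchar (by linear_combination hplus m + hminus m)
  have hupper (m : Fin h) : x (lower h m).rev = 0 := by
    have := hplus m
    rw [hlower, zero_add, mul_eq_zero] at this
    exact this.resolve_left (div_ne_zero (pow_ne_zero _ (neg_ne_zero.2 one_ne_zero)) hchar)
  funext i
  rcases eq_lower_or_eq_rev_lower_or_eq_middle h i with ⟨m, rfl⟩ | ⟨m, rfl⟩ | rfl
  exacts [hlower m, hupper m, hmiddle]

noncomputable def hyperbolicEquiv (hchar : (2 : k) ≠ 0) :
    (Fin (h + h + 1) → k) ≃ₗ[k] (Fin h → k) × (Fin h → k) × k :=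
  (hyperbolicCoords h k).linearEquivOfInjective (hyperbolicCoords_injective h k hchar)
    (by simp only [Module.finrank_fin_fun, Module.finrank_prod, Module.finrank_self]; ring)

end AntidiagonalForm

open AntidiagonalForm in
theorem antidiagonal_form_decomposition_general (k : Type*) [Field k]
    (hchar : (2 : k) ≠ 0) (n : ℕ) (hn : Even n) :
    ∃ e : (Fin (n + 1) → k) ≃ₗ[k] ((Fin (n / 2) → k) × (Fin (n / 2) → k) × k),
      ∀ x : Fin (n + 1) → k,
        ∑ ℓ : Fin (n + 1), (-1 : k) ^ (ℓ : ℕ) * (n.choose ℓ : k) * x ℓ * x ℓ.rev =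
          (∑ m : Fin (n / 2),
            (n.choose (m : ℕ) : k) * (((e x).1 m) ^ 2 - ((e x).2.1 m) ^ 2)) +
          (-1 : k) ^ (n / 2) * (n.choose (n / 2) : k) * ((e x).2.2) ^ 2 := by
  obtain ⟨h, rfl⟩ := hn
  rw [show (h + h) / 2 = h by omega]
  refine ⟨hyperbolicEquiv h k hchar, fun x => ?_⟩
  rw [sum_mul_mul_rev h (fun i => (-1) ^ (i : ℕ) * ((h + h).choose i : k)) x
    (neg_one_pow_mul_choose_rev h)]
  simp only [hyperbolicEquiv, LinearMap.linearEquivOfInjective_apply, hyperbolicCoords_apply,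
    val_lower, val_middle]
  congr 1
  refine Finset.sum_congr rfl fun m _ => ?_
  field_simp
  ring

/-- In characteristic ≠ 2, the quadratic form with antidiagonal Gram entries
`(-1)^ℓ C(n,ℓ)` on `k^{n+1}` is isomorphic to
`H ⊗ (φ_even ⊕ φ_odd) ⊕ ⟨(-1)^{n/2} C(n,n/2)⟩`, where `H = ⟨1,-1⟩` and
`φ_even`, `φ_odd` are the diagonal forms of binomial coefficients `C(n,m)`,
`0 ≤ m < n/2`, with `m` even resp. odd. -/
theorem antidiagonal_form_decomposition (k : Type*) [Field k]
    (hchar : (2 : k) ≠ 0) (n : ℕ) (hn : Even n) (hpos : 0 < n) :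
    ∃ e : (Fin (n + 1) → k) ≃ₗ[k] ((Fin (n / 2) → k) × (Fin (n / 2) → k) × k),
      ∀ x : Fin (n + 1) → k,
        ∑ ℓ : Fin (n + 1), (-1 : k) ^ (ℓ : ℕ) * (n.choose ℓ : k) * x ℓ * x ℓ.rev =
          (∑ m : Fin (n / 2),
            (n.choose (m : ℕ) : k) * (((e x).1 m) ^ 2 - ((e x).2.1 m) ^ 2)) +
          (-1 : k) ^ (n / 2) * (n.choose (n / 2) : k) * ((e x).2.2) ^ 2 :=
  antidiagonal_form_decomposition_general k hchar n hn
end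

section
/- Let n ≥ 4 be a power of 2, and k a field of characteristic 2. Then the quadratic form on k^{n+1} given by q(x) = (C(n,n/2)/2) x_{n/2}² + Σ_{0 ≤ m < n/2, m even} C(n,m) x_m x_{n-m} (coefficients reduced mod 2) has nondefective part isomorphic to [1] ⊕ H, where [1] is the one-dimensional form x ↦ x² and H the hyperbolic plane, and its defective part, the radical on which q vanishes, has dimension n - 2. -/
-- Auxiliary: for j ≥ 2, C(2^j, 2^(j-1))/2 is odd
lemma aux_odd_half_central (j : ℕ) (hj : 2 ≤ j) :
    Odd ((2 ^ j).choose (2 ^ (j - 1)) / 2) := by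
  set C := (2 ^ j).choose (2 ^ (j - 1)) with hCdef
  have hkn : 2 ^ (j - 1) ≤ 2 ^ j := Nat.pow_le_pow_right (by norm_num) (by omega)
  have hk0 : (2 : ℕ) ^ (j - 1) ≠ 0 := by positivity
  have h := Nat.Prime.emultiplicity_choose_prime_pow_add_emultiplicity
    Nat.prime_two hkn hk0
  rw [Nat.Prime.emultiplicity_pow_self Nat.prime_two] at h
  have hC1 : emultiplicity 2 C = 1 := by
    have e1 : (j : ℕ∞) = ((j - 1 : ℕ) : ℕ∞) + 1 := by
      have e0 : ((j - 1) + 1 : ℕ) = j := by omega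
      rw [← e0]
      push_cast
      ring
    rw [e1, add_comm (((j - 1 : ℕ) : ℕ∞)) 1] at h
    exact WithTop.add_right_cancel (by simp : ((j - 1 : ℕ) : ℕ∞) ≠ ⊤) h
  have h2 : 2 ∣ C := by
    have : (2 : ℕ) ^ 1 ∣ C := pow_dvd_of_le_emultiplicity (by rw [hC1]; exact_mod_cast le_rfl)
    simpa using this
  have h4 : ¬ (4 : ℕ) ∣ C := by
    have : ¬ (2 : ℕ) ^ 2 ∣ C := by
      rw [← emultiplicity_lt_iff_not_dvd, hC1]
      exact_mod_cast one_lt_two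
    simpa [show (4 : ℕ) = 2 ^ 2 by norm_num] using this
  rw [Nat.odd_iff]
  omega


def invariantAuxEquiv (k : Type*) [Field k] (n : ℕ) (hn : 4 ≤ n) (hev : n % 2 = 0) :
    (Fin (n + 1) → k) ≃ₗ[k] (k × (k × k) × (Fin (n - 2) → k)) := {

  toFun := fun x => (x ⟨n / 2, by omega⟩, (x ⟨0, by omega⟩, x ⟨n, by omega⟩),
    fun i => x ⟨if (i : ℕ) + 1 < n / 2 then (i : ℕ) + 1 else (i : ℕ) + 2, by
      have := i.isLt; split <;> omega⟩)
  map_add' := fun x y => rfl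
  map_smul' := fun c x => rfl
  invFun := fun u => fun jf =>
    if h0 : (jf : ℕ) = 0 then u.2.1.1
    else if h1 : (jf : ℕ) = n / 2 then u.1
    else if h2 : (jf : ℕ) = n then u.2.1.2
    else u.2.2 ⟨if (jf : ℕ) < n / 2 then (jf : ℕ) - 1 else (jf : ℕ) - 2, by
      have := jf.isLt; split <;> omega⟩
  left_inv := by
    intro x
    funext jf
    have hjf := jf.isLt
    try simp only [Fin.val_mk]
    split_ifs <;>
      first
        | (exact congrArg x (Fin.ext (by (try simp only [Fin.val_mk]); omega)))
        | (exfalso; omega)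
        | simp_all
  right_inv := by
    intro u
    refine Prod.ext ?_ (Prod.ext (Prod.ext ?_ ?_) ?_)
    · try simp only [Fin.val_mk]
      split_ifs <;> first | rfl | (exfalso; omega) | simp_all
    · try simp only [Fin.val_mk]
      split_ifs <;> first | rfl | (exfalso; omega) | simp_all
    · try simp only [Fin.val_mk]
      split_ifs <;> first | rfl | (exfalso; omega) | simp_all
    · funext i
      have hi := i.isLt
      try simp only [Fin.val_mk]
      split_ifs <;>
        first
          | (exfalso; omega)
          | (exact congrArg u.2.2 (Fin.ext (by (try simp only [Fin.val_mk]); omega)))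
          | simp_all
  }

lemma invariantAuxEquiv_apply (k : Type*) [Field k] (n : ℕ) (hn : 4 ≤ n) (hev : n % 2 = 0)
    (x : Fin (n + 1) → k) :
    invariantAuxEquiv k n hn hev x =
      (x ⟨n / 2, by omega⟩, (x ⟨0, by omega⟩, x ⟨n, by omega⟩),
        fun i : Fin (n - 2) => x ⟨if (i : ℕ) + 1 < n / 2 then (i : ℕ) + 1 else (i : ℕ) + 2, by
          have := i.isLt; split <;> omega⟩) := rfl

set_option maxHeartbeats 1000000 in
/-- Characteristic 2, `n ≥ 4` a power of 2: the `SL₂`-invariant quadratic form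
`(C(n,n/2)/2) x_{n/2}² + Σ_{m < n/2 even} C(n,m) x_m x_{n-m}` on `k^{n+1}` is
isomorphic to `[1] ⊕ H ⊕ (n-2)·[0]`. -/
theorem invariant_form_char_two_power (k : Type*) [Field k] [CharP k 2]
    (n : ℕ) (hn : 4 ≤ n) (hpow : ∃ j : ℕ, n = 2 ^ j) :
    ∃ e : (Fin (n + 1) → k) ≃ₗ[k] (k × (k × k) × (Fin (n - 2) → k)),
      ∀ x : Fin (n + 1) → k,
        ((n.choose (n / 2) / 2 : ℕ) : k) *
            x ⟨n / 2, Nat.lt_succ_of_le (Nat.div_le_self n 2)⟩ ^ 2 +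
          (∑ m : Fin (n + 1),
            if (m : ℕ) < n / 2 ∧ Even (m : ℕ) then
              (n.choose (m : ℕ) : k) * x m * x m.rev else 0) =
        (e x).1 ^ 2 + (e x).2.1.1 * (e x).2.1.2 := by
  have hev : n % 2 = 0 := by
    obtain ⟨j, rfl⟩ := hpow
    have hj : 1 ≤ j := by
      by_contra h
      interval_cases j <;> omega
    obtain ⟨i, rfl⟩ := Nat.exists_eq_add_of_le hj
    rw [pow_add, pow_one]
    omega
  refine ⟨invariantAuxEquiv k n hn hev, ?_⟩
  intro x
  have hodd : Odd (n.choose (n / 2) / 2) := by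
    obtain ⟨j, rfl⟩ := hpow
    have hj : 2 ≤ j := by
      by_contra h
      interval_cases j <;> omega
    have hhalf : 2 ^ j / 2 = 2 ^ (j - 1) := by
      simpa using Nat.pow_div (show 1 ≤ j by omega) (show 0 < 2 by norm_num)
    rw [hhalf]
    exact aux_odd_half_central j hj
  have hcoef : ((n.choose (n / 2) / 2 : ℕ) : k) = 1 := by
    obtain ⟨r, hr⟩ := hodd
    rw [hr]
    have h2 : (2 : k) = 0 := by
      have := CharP.cast_eq_zero k 2
      exact_mod_cast this
    push_cast
    rw [h2]
    ring
  have hzero : ∀ m : Fin (n + 1), m ≠ (⟨0, by omega⟩ : Fin (n + 1)) →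
      (if (m : ℕ) < n / 2 ∧ Even (m : ℕ) then
        (n.choose (m : ℕ) : k) * x m * x m.rev else 0) = 0 := by
    intro m hm
    split_ifs with hc
    · obtain ⟨hlt, heven⟩ := hc
      have hm0 : (m : ℕ) ≠ 0 := fun h => hm (Fin.ext h)
      have hdvd : 2 ∣ n.choose (m : ℕ) := by
        obtain ⟨j, rfl⟩ := hpow
        exact Nat.Prime.dvd_choose_pow Nat.prime_two hm0 (by omega)
      rw [(CharP.cast_eq_zero_iff k 2 _).mpr hdvd, zero_mul, zero_mul]
    · rfl
  have hsum : (∑ m : Fin (n + 1),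
      if (m : ℕ) < n / 2 ∧ Even (m : ℕ) then
        (n.choose (m : ℕ) : k) * x m * x m.rev else 0) =
      x ⟨0, by omega⟩ * x ⟨n, by omega⟩ := by
    rw [Fintype.sum_eq_single _ hzero]
    rw [if_pos ⟨by show (0 : ℕ) < n / 2; omega, by show Even (0 : ℕ); exact Even.zero⟩]
    have hrev : (⟨0, by omega⟩ : Fin (n + 1)).rev = ⟨n, by omega⟩ := by
      apply Fin.ext
      rw [Fin.val_rev]
      show n + 1 - (0 + 1) = n
      omega
    rw [hrev]
    show ((n.choose 0 : ℕ) : k) * _ * _ = _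
    rw [Nat.choose_zero_right, Nat.cast_one, one_mul]
  rw [hcoef, hsum, one_mul, invariantAuxEquiv_apply]
end
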